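/- arXiv:1504.07586 — 6 statements merged into one kernel-verified Lean document; each statement's English description precedes it below -/
import Mathlib

section
/- (Lemma 1, algebraic core.) Fix an integer m ≥ 2 and matrices A ∈ ℂ^{n×n}, B ∈ ℂ^{n×n_u}, C ∈ ℂ^{n_y×n}, D ∈ ℂ^{n_y×n_u}. Assume: (Assumption 1) B has full column rank, i.e., B ν = 0 implies ν = 0; (Assumption 2) the stacked matrix O with block rows C A^j for 0 ≤ j ≤ m−2 has full column rank, i.e., C A^j x = 0 for all 0 ≤ j ≤ m−2 implies x = 0. Suppose λ₀ ∈ ℂ, ξ ∈ ℂ^n, and ν ∈ ℂ^{n_u} with ν ≠ 0 satisfy the lifted zero equations: λ₀ C A^j ξ + D̃_j ν = 0 for all 0 ≤ j ≤ m−1, and (I − λ₀ Ã) ξ − B̃ ν = 0, where Ã := A^m, B̃ := (Σ_{k=0}^{m-1} A^k) B, and D̃_j := C (Σ_{i=0}^{j-1} A^i) B + D. Then λ₀ = 1. Hence the lifted dual-rate system has no zero other than at λ = 1. -/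
open Matrix Finset

/-- Algebraic core of Lemma 1: under full column rank of `B` and of the stacked
observability matrix with block rows `C A^j`, `0 ≤ j ≤ m−2`, any witness
`(ξ, ν)` with `ν ≠ 0` of the lifted zero equations at `λ₀` forces `λ₀ = 1`;
i.e. the lifted dual-rate system has no zero other than at `λ = 1`. -/
theorem lifted_zeros_only_at_one
    (n n_u n_y m : ℕ) (hm : 2 ≤ m)
    (A : Matrix (Fin n) (Fin n) ℂ) (B : Matrix (Fin n) (Fin n_u) ℂ)
    (C : Matrix (Fin n_y) (Fin n) ℂ) (D : Matrix (Fin n_y) (Fin n_u) ℂ)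
    (hB : ∀ ν : Fin n_u → ℂ, B.mulVec ν = 0 → ν = 0)
    (hO : ∀ x : Fin n → ℂ, (∀ j ≤ m - 2, (C * A ^ j).mulVec x = 0) → x = 0)
    (lam0 : ℂ) (ξ : Fin n → ℂ) (ν : Fin n_u → ℂ) (hν : ν ≠ 0)
    (hzero : ∀ j ≤ m - 1,
      lam0 • (C * A ^ j).mulVec ξ +
        (C * (∑ i ∈ Finset.range j, A ^ i) * B + D).mulVec ν = 0)
    (hstate : (1 - lam0 • A ^ m).mulVec ξ -
        ((∑ k ∈ Finset.range m, A ^ k) * B).mulVec ν = 0) :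
    lam0 = 1 := by
  by_contra hlam
  have key : ∀ j ≤ m - 2,
      (C * A ^ j).mulVec (lam0 • (A - 1).mulVec ξ + B.mulVec ν) = 0 := by
    intro j hj
    have h1 := hzero j (by omega)
    have h2 := hzero (j + 1) (by omega)
    have e1 : C * A ^ j * (A - 1) = C * A ^ (j + 1) - C * A ^ j := by
      rw [Matrix.mul_sub, Matrix.mul_one, Matrix.mul_assoc, ← pow_succ]
    have e2 : C * A ^ j * B =
        (C * (∑ i ∈ Finset.range (j + 1), A ^ i) * B + D) -
          (C * (∑ i ∈ Finset.range j, A ^ i) * B + D) := by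
      rw [Finset.sum_range_succ, Matrix.mul_add, Matrix.add_mul]
      abel
    rw [Matrix.mulVec_add, Matrix.mulVec_smul, Matrix.mulVec_mulVec,
      Matrix.mulVec_mulVec, e1, e2, Matrix.sub_mulVec, Matrix.sub_mulVec, smul_sub]
    linear_combination (norm := module) h2 - h1
  have hw : lam0 • (A - 1).mulVec ξ + B.mulVec ν = 0 := hO _ key
  have hBν : B.mulVec ν = -(lam0 • (A - 1).mulVec ξ) := by
    linear_combination (norm := module) hw
  have hgeom : (∑ k ∈ Finset.range m, A ^ k) * (A - 1) = A ^ m - 1 :=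
    geom_sum_mul A m
  have hξ : (1 - lam0) • ξ = 0 := by
    have hs : ((∑ k ∈ Finset.range m, A ^ k) * B).mulVec ν =
        -(lam0 • ((A ^ m - 1).mulVec ξ)) := by
      rw [← Matrix.mulVec_mulVec, hBν, ← hgeom, ← Matrix.mulVec_mulVec]
      simp [Matrix.mulVec_neg, Matrix.mulVec_smul, Matrix.mulVec_mulVec]
    rw [hs] at hstate
    simp only [Matrix.sub_mulVec, Matrix.one_mulVec, Matrix.smul_mulVec,
      Matrix.sub_mulVec, sub_smul, one_smul] at hstate ⊢
    linear_combination (norm := module) hstate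
  have hξ0 : ξ = 0 := by
    rcases smul_eq_zero.mp hξ with h | h
    · exact absurd (by linear_combination -h) hlam
    · exact h
  apply hν
  apply hB
  rw [hBν, hξ0]
  simp
end

section
/- (Theorem, algebraic core: the zero at λ = 1 of the lifted system has multiplicity at most one.) Fix an integer m ≥ 2 and matrices A ∈ ℂ^{n×n}, B ∈ ℂ^{n×n_u}, C ∈ ℂ^{n_y×n}, D ∈ ℂ^{n_y×n_u}. Assume B has full column rank and that the stacked matrix with block rows C A^j, 0 ≤ j ≤ m−2, has full column rank. Suppose ξ₁, ξ₂ ∈ ℂ^n and ν₁, ν₂ ∈ ℂ^{n_u} satisfy the null-chain equations: (i) C A^j ξ₁ + D̃_j ν₁ = 0 for all 0 ≤ j ≤ m−1; (ii) C A^j ξ₂ + D̃_j ν₂ = 0 for all 0 ≤ j ≤ m−1; (iii) (I − Ã) ξ₁ − B̃ ν₁ = 0; (iv) −ξ₁ + (I − Ã) ξ₂ − B̃ ν₂ = 0, where Ã := A^m, B̃ := (Σ_{k=0}^{m-1} A^k) B, and D̃_j := C (Σ_{i=0}^{j-1} A^i) B + D. Then ξ₁ = 0 and ν₁ = 0. Hence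 there is no nontrivial right null chain at λ = 1, so λ = 1 is a zero of the lifted system of algebraic multiplicity at most one, and no unbounded stealthy actuator attack is possible against the dual-rate sampled-data scheme. -/
open Matrix Finset

/-- Algebraic core of the main theorem: under full column rank of `B` and of
the stacked matrix with block rows `C A^j`, `0 ≤ j ≤ m−2`, the null-chain
equations at `λ = 1` for the lifted dual-rate system force `ξ₁ = 0` and
`ν₁ = 0`; hence `λ = 1` is a zero of algebraic multiplicity at most one and no
unbounded stealthy actuator attack is possible. -/
theorem no_null_chain_at_one
    (n n_u n_y m : ℕ) (hm : 2 ≤ m)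
    (A : Matrix (Fin n) (Fin n) ℂ) (B : Matrix (Fin n) (Fin n_u) ℂ)
    (C : Matrix (Fin n_y) (Fin n) ℂ) (D : Matrix (Fin n_y) (Fin n_u) ℂ)
    (hB : ∀ ν : Fin n_u → ℂ, B.mulVec ν = 0 → ν = 0)
    (hO : ∀ x : Fin n → ℂ, (∀ j ≤ m - 2, (C * A ^ j).mulVec x = 0) → x = 0)
    (ξ₁ ξ₂ : Fin n → ℂ) (ν₁ ν₂ : Fin n_u → ℂ)
    (h1 : ∀ j ≤ m - 1,
      (C * A ^ j).mulVec ξ₁ +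
        (C * (∑ i ∈ Finset.range j, A ^ i) * B + D).mulVec ν₁ = 0)
    (h2 : ∀ j ≤ m - 1,
      (C * A ^ j).mulVec ξ₂ +
        (C * (∑ i ∈ Finset.range j, A ^ i) * B + D).mulVec ν₂ = 0)
    (h3 : (1 - A ^ m).mulVec ξ₁ -
        ((∑ k ∈ Finset.range m, A ^ k) * B).mulVec ν₁ = 0)
    (h4 : -ξ₁ + (1 - A ^ m).mulVec ξ₂ -
        ((∑ k ∈ Finset.range m, A ^ k) * B).mulVec ν₂ = 0) :
    ξ₁ = 0 ∧ ν₁ = 0 := by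
  -- Key: any pair satisfying the chain equations is a fixed point of the dynamics.
  have key : ∀ (ξ : Fin n → ℂ) (ν : Fin n_u → ℂ),
      (∀ j ≤ m - 1, (C * A ^ j).mulVec ξ +
        (C * (∑ i ∈ Finset.range j, A ^ i) * B + D).mulVec ν = 0) →
      A.mulVec ξ + B.mulVec ν = ξ := by
    intro ξ ν h
    have hz : (A.mulVec ξ + B.mulVec ν) - ξ = 0 := by
      apply hO
      intro j hj
      have e1 := h j (by omega)
      have e2 := h (j + 1) (by omega)
      have hs : (∑ i ∈ Finset.range (j + 1), A ^ i)
          = (∑ i ∈ Finset.range j, A ^ i) + A ^ j := Finset.sum_range_succ _ _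
      have hcalc : (C * A ^ j).mulVec (A.mulVec ξ + B.mulVec ν - ξ)
          = ((C * A ^ (j + 1)).mulVec ξ +
              (C * (∑ i ∈ Finset.range (j + 1), A ^ i) * B + D).mulVec ν)
            - ((C * A ^ j).mulVec ξ +
              (C * (∑ i ∈ Finset.range j, A ^ i) * B + D).mulVec ν) := by
        rw [hs, pow_succ]
        simp only [Matrix.mulVec_add, Matrix.mulVec_sub, Matrix.add_mulVec,
          Matrix.mul_add, Matrix.add_mul, ← Matrix.mulVec_mulVec, ← mul_assoc]
        abel
      rw [hcalc, e1, e2, sub_zero]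
    exact sub_eq_zero.mp hz
  have hfix1 : A.mulVec ξ₁ + B.mulVec ν₁ = ξ₁ := key ξ₁ ν₁ h1
  have hfix2 : A.mulVec ξ₂ + B.mulVec ν₂ = ξ₂ := key ξ₂ ν₂ h2
  -- iterate the fixed point property
  have hiter : ∀ j, (A ^ j).mulVec ξ₂ +
      ((∑ i ∈ Finset.range j, A ^ i) * B).mulVec ν₂ = ξ₂ := by
    intro j
    induction j with
    | zero => simp
    | succ j ih =>
      have ha : (A ^ (j + 1)) *ᵥ ξ₂ = A ^ j *ᵥ (A *ᵥ ξ₂) := by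
        rw [pow_succ, ← Matrix.mulVec_mulVec]
      have hb : ((∑ i ∈ Finset.range (j + 1), A ^ i) * B) *ᵥ ν₂
          = ((∑ i ∈ Finset.range j, A ^ i) * B) *ᵥ ν₂ + A ^ j *ᵥ (B *ᵥ ν₂) := by
        rw [Finset.sum_range_succ, Matrix.add_mul, Matrix.add_mulVec,
          Matrix.mulVec_mulVec]
      rw [ha, hb]
      calc (A ^ j).mulVec (A.mulVec ξ₂) +
            (((∑ i ∈ Finset.range j, A ^ i) * B).mulVec ν₂ +
              (A ^ j).mulVec (B.mulVec ν₂))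
          = ((A ^ j).mulVec (A.mulVec ξ₂ + B.mulVec ν₂)) +
              ((∑ i ∈ Finset.range j, A ^ i) * B).mulVec ν₂ := by
            rw [Matrix.mulVec_add]; abel
        _ = ξ₂ := by rw [hfix2]; exact ih
  have hxi1 : ξ₁ = 0 := by
    have h4' : ξ₁ = (1 - A ^ m).mulVec ξ₂ -
        ((∑ k ∈ Finset.range m, A ^ k) * B).mulVec ν₂ := by
      have h5 := h4
      rw [neg_add_eq_sub, sub_sub, sub_eq_zero] at h5
      exact eq_sub_of_add_eq h5.symm
    rw [h4', Matrix.sub_mulVec, Matrix.one_mulVec]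
    have := hiter m
    calc ξ₂ - (A ^ m).mulVec ξ₂ - ((∑ k ∈ Finset.range m, A ^ k) * B).mulVec ν₂
        = ξ₂ - ((A ^ m).mulVec ξ₂ + ((∑ k ∈ Finset.range m, A ^ k) * B).mulVec ν₂) := by
          abel
      _ = 0 := by rw [this]; abel
  refine ⟨hxi1, hB ν₁ ?_⟩
  have := hfix1
  rw [hxi1, Matrix.mulVec_zero, zero_add] at this
  exact this
end

section
/- (Proposition 3, forward direction.) Fix an integer m ≥ 2 and matrices A ∈ ℂ^{n×n}, B ∈ ℂ^{n×n_u}, C ∈ ℂ^{n_y×n}, D ∈ ℂ^{n_y×n_u}, and assume the stacked matrix with block rows C A^j, 0 ≤ j ≤ m−2, has full column rank. If ξ ∈ ℂ^n and ν ∈ ℂ^{n_u} satisfy C A^j ξ + D̃_j ν = 0 for all 0 ≤ j ≤ m−1 and (I − Ã) ξ − B̃ ν = 0 (i.e., (ξ, ν) witnesses a zero of the lifted system at λ = 1), then C ξ + D ν = 0 and (I − A) ξ − B ν = 0 (i.e., the same pair witnesses a zero of the fast single-rate system P_m at λ = 1). Here Ã := A^m, B̃ := (Σ_{k=0}^{m-1}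 A^k) B, and D̃_j := C (Σ_{i=0}^{j-1} A^i) B + D. -/
open Matrix Finset

section LiftedOutput

variable {R ι ιu ιy : Type*} [Ring R] [Fintype ι] [DecidableEq ι] [Fintype ιu]

/-- The `j`-th block output `C̃_j ξ + D̃_j ν` of the lifted dual-rate system. -/
def liftedOutput (A : Matrix ι ι R) (B : Matrix ι ιu R) (C : Matrix ιy ι R)
    (D : Matrix ιy ιu R) (j : ℕ) (ξ : ι → R) (ν : ιu → R) : ιy → R :=
  (C * A ^ j) *ᵥ ξ + (C * (∑ i ∈ range j, A ^ i) * B + D) *ᵥ ν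

variable (A : Matrix ι ι R) (B : Matrix ι ιu R) (C : Matrix ιy ι R) (D : Matrix ιy ιu R)
  (ξ : ι → R) (ν : ιu → R)

theorem liftedOutput_zero : liftedOutput A B C D 0 ξ ν = C *ᵥ ξ + D *ᵥ ν := by
  simp [liftedOutput]

theorem liftedOutput_sub_liftedOutput_succ (j : ℕ) :
    liftedOutput A B C D j ξ ν - liftedOutput A B C D (j + 1) ξ ν =
      (C * A ^ j) *ᵥ ((1 - A) *ᵥ ξ - B *ᵥ ν) := by
  simp only [liftedOutput, sum_range_succ, pow_succ, mulVec_sub, mulVec_mulVec,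
    Matrix.mul_add, Matrix.add_mul, add_mulVec, sub_mulVec, Matrix.mul_one, Matrix.mul_assoc]
  abel

end LiftedOutput

theorem lifted_zero_at_one_implies_fast_zero_general
    (n n_u n_y m : ℕ) (hm : 2 ≤ m)
    (A : Matrix (Fin n) (Fin n) ℂ) (B : Matrix (Fin n) (Fin n_u) ℂ)
    (C : Matrix (Fin n_y) (Fin n) ℂ) (D : Matrix (Fin n_y) (Fin n_u) ℂ)
    (hO : ∀ x : Fin n → ℂ, (∀ j ≤ m - 2, (C * A ^ j).mulVec x = 0) → x = 0)
    (ξ : Fin n → ℂ) (ν : Fin n_u → ℂ)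
    (hout : ∀ j ≤ m - 1,
      (C * A ^ j).mulVec ξ +
        (C * (∑ i ∈ Finset.range j, A ^ i) * B + D).mulVec ν = 0) :
    C.mulVec ξ + D.mulVec ν = 0 ∧ (1 - A).mulVec ξ - B.mulVec ν = 0 := by
  have hout : ∀ j ≤ m - 1, liftedOutput A B C D j ξ ν = 0 := hout
  refine ⟨liftedOutput_zero A B C D ξ ν ▸ hout 0 (Nat.zero_le _), hO _ fun j hj => ?_⟩
  rw [← liftedOutput_sub_liftedOutput_succ, hout j (by omega), hout (j + 1) (by omega), sub_zero]

/-- Proposition 3, forward direction: under full column rank of the stacked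
matrix with block rows `C A^j`, `0 ≤ j ≤ m−2`, a witness `(ξ, ν)` of a zero at
`λ = 1` of the lifted dual-rate system is also a witness of a zero at `λ = 1`
of the fast single-rate system `P_m = [A, B, C, D]`. -/
theorem lifted_zero_at_one_implies_fast_zero
    (n n_u n_y m : ℕ) (hm : 2 ≤ m)
    (A : Matrix (Fin n) (Fin n) ℂ) (B : Matrix (Fin n) (Fin n_u) ℂ)
    (C : Matrix (Fin n_y) (Fin n) ℂ) (D : Matrix (Fin n_y) (Fin n_u) ℂ)
    (hO : ∀ x : Fin n → ℂ, (∀ j ≤ m - 2, (C * A ^ j).mulVec x = 0) → x = 0)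
    (ξ : Fin n → ℂ) (ν : Fin n_u → ℂ)
    (hout : ∀ j ≤ m - 1,
      (C * A ^ j).mulVec ξ +
        (C * (∑ i ∈ Finset.range j, A ^ i) * B + D).mulVec ν = 0)
    (hstate : (1 - A ^ m).mulVec ξ -
        ((∑ k ∈ Finset.range m, A ^ k) * B).mulVec ν = 0) :
    C.mulVec ξ + D.mulVec ν = 0 ∧ (1 - A).mulVec ξ - B.mulVec ν = 0 :=
  lifted_zero_at_one_implies_fast_zero_general n n_u n_y m hm A B C D hO ξ ν hout
end

section
/- (Proposition 3, converse direction.) Fix an integer m ≥ 1 and matrices A ∈ ℂ^{n×n}, B ∈ ℂ^{n×n_u}, C ∈ ℂ^{n_y×n}, D ∈ ℂ^{n_y×n_u}. If ξ ∈ ℂ^n and ν ∈ ℂ^{n_u} satisfy (I − A) ξ − B ν = 0 and C ξ + D ν = 0 (a zero of the fast single-rate system P_m at λ = 1), then (I − Ã) ξ − B̃ ν = 0 and C A^j ξ + D̃_j ν = 0 for all 0 ≤ j ≤ m−1 (the same pair witnesses a zero of the lifted dual-rate system at λ = 1). Here Ã := A^m, B̃ := (Σ_{k=0}^{m-1} A^k)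 B, and D̃_j := C (Σ_{i=0}^{j-1} A^i) B + D. -/
open Matrix Finset

/-- Proposition 3, converse direction: a witness `(ξ, ν)` of a zero at `λ = 1`
of the fast single-rate system `P_m = [A, B, C, D]` is also a witness of a zero
at `λ = 1` of the lifted dual-rate system with matrices `Ã = A^m`,
`B̃ = (Σ_{k<m} A^k) B`, `C̃_j = C A^j`, `D̃_j = C (Σ_{i<j} A^i) B + D`. -/
theorem fast_zero_at_one_implies_lifted_zero
    (n n_u n_y m : ℕ) (hm : 1 ≤ m)
    (A : Matrix (Fin n) (Fin n) ℂ) (B : Matrix (Fin n) (Fin n_u) ℂ)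
    (C : Matrix (Fin n_y) (Fin n) ℂ) (D : Matrix (Fin n_y) (Fin n_u) ℂ)
    (ξ : Fin n → ℂ) (ν : Fin n_u → ℂ)
    (hstate : (1 - A).mulVec ξ - B.mulVec ν = 0)
    (hout : C.mulVec ξ + D.mulVec ν = 0) :
    (1 - A ^ m).mulVec ξ - ((∑ k ∈ Finset.range m, A ^ k) * B).mulVec ν = 0 ∧
    ∀ j ≤ m - 1,
      (C * A ^ j).mulVec ξ +
        (C * (∑ i ∈ Finset.range j, A ^ i) * B + D).mulVec ν = 0 := by
  have h2 : ξ - A.mulVec ξ - B.mulVec ν = 0 := by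
    rw [Matrix.sub_mulVec, Matrix.one_mulVec] at hstate
    exact hstate
  have hA : A.mulVec ξ = ξ - B.mulVec ν := by
    have := sub_eq_zero.mp (show ξ - B.mulVec ν - A.mulVec ξ = 0 by rw [← h2]; abel)
    exact this.symm
  have key : ∀ j : ℕ, (A ^ j).mulVec ξ
      = ξ - (∑ i ∈ Finset.range j, A ^ i).mulVec (B.mulVec ν) := by
    intro j
    induction j with
    | zero => simp
    | succ j ih =>
        rw [pow_succ, ← Matrix.mulVec_mulVec, hA, Matrix.mulVec_sub, ih,
          Finset.sum_range_succ, Matrix.add_mulVec]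
        abel
  constructor
  · rw [Matrix.sub_mulVec, Matrix.one_mulVec, key m, Matrix.mulVec_mulVec]
    abel
  · intro j _
    rw [← Matrix.mulVec_mulVec, key j, Matrix.add_mulVec, Matrix.mulVec_sub,
      Matrix.mulVec_mulVec, Matrix.mulVec_mulVec]
    linear_combination (norm := abel) hout
end

section
/- (Fat plant proposition.) Let A ∈ ℂ^{n×n}, B ∈ ℂ^{n×n_u}, C ∈ ℂ^{n_y×n}, D ∈ ℂ^{n_y×n_u} with n_u > n_y. Then there exist ξ ∈ ℂ^n and ν ∈ ℂ^{n_u}, not both zero, such that (I − A) ξ − B ν = 0 and C ξ + D ν = 0. Consequently, for every integer m ≥ 1, the lifted dual-rate system has a zero at λ = 1: the same pair satisfies (I − Ã) ξ − B̃ ν = 0 and C A^j ξ + D̃_j ν = 0 for all 0 ≤ j ≤ m−1, where Ã := A^m, B̃ := (Σ_{k=0}^{m-1} A^k) B, D̃_j := C (Σ_{i=0}^{j-1} A^i) B + D. -/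
open Matrix Finset

/-- Fat plant proposition: if the plant has more inputs than outputs
(`n_u > n_y`), then there is a nontrivial witness `(ξ, ν)` of a zero at
`λ = 1` of `[A, B, C, D]`, and the same pair witnesses a zero at `λ = 1` of the
lifted dual-rate system for every `m ≥ 1`. -/
theorem fat_plant_zero_at_one
    (n n_u n_y : ℕ) (hfat : n_y < n_u)
    (A : Matrix (Fin n) (Fin n) ℂ) (B : Matrix (Fin n) (Fin n_u) ℂ)
    (C : Matrix (Fin n_y) (Fin n) ℂ) (D : Matrix (Fin n_y) (Fin n_u) ℂ) :
    ∃ (ξ : Fin n → ℂ) (ν : Fin n_u → ℂ),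
      (ξ ≠ 0 ∨ ν ≠ 0) ∧
      (1 - A).mulVec ξ - B.mulVec ν = 0 ∧
      C.mulVec ξ + D.mulVec ν = 0 ∧
      ∀ m : ℕ, 1 ≤ m →
        ((1 - A ^ m).mulVec ξ -
            ((∑ k ∈ Finset.range m, A ^ k) * B).mulVec ν = 0 ∧
          ∀ j ≤ m - 1,
            (C * A ^ j).mulVec ξ +
              (C * (∑ i ∈ Finset.range j, A ^ i) * B + D).mulVec ν = 0) := by
  -- block matrix
  set M : Matrix (Fin n ⊕ Fin n_y) (Fin n ⊕ Fin n_u) ℂ :=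
    Matrix.fromBlocks (1 - A) (-B) C D with hM
  have hker : LinearMap.ker M.mulVecLin ≠ ⊥ := by
    apply LinearMap.ker_ne_bot_of_finrank_lt
    simp only [Module.finrank_pi, Fintype.card_sum, Fintype.card_fin]
    omega
  obtain ⟨x, hxker, hx0⟩ := Submodule.exists_mem_ne_zero_of_ne_bot hker
  set ξ : Fin n → ℂ := x ∘ Sum.inl with hξ
  set ν : Fin n_u → ℂ := x ∘ Sum.inr with hν
  have hxe : x = Sum.elim ξ ν := by funext i; cases i <;> rfl
  have hx : M.mulVec x = 0 := hxker
  rw [hxe, hM, Matrix.fromBlocks_mulVec] at hx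
  have h1 : (1 - A).mulVec ξ - B.mulVec ν = 0 := by
    have h := congrFun hx
    have h1' : (1 - A).mulVec ξ + (-B).mulVec ν = 0 := by
      funext i; simpa using h (Sum.inl i)
    rw [Matrix.neg_mulVec] at h1'
    simpa [sub_eq_add_neg] using h1'
  have h2 : C.mulVec ξ + D.mulVec ν = 0 := by
    funext i; simpa using congrFun hx (Sum.inr i)
  have hAξ : A.mulVec ξ = ξ - B.mulVec ν := by
    have := sub_eq_zero.mp h1
    rw [Matrix.sub_mulVec, Matrix.one_mulVec] at this
    linear_combination (norm := module) -this
  have key : ∀ j : ℕ, (A ^ j).mulVec ξ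
      = ξ - ((∑ i ∈ Finset.range j, A ^ i) * B).mulVec ν := by
    intro j
    induction j with
    | zero => simp
    | succ j ih =>
      have hs : ∑ i ∈ Finset.range (j + 1), A ^ i
          = (A * ∑ i ∈ Finset.range j, A ^ i) + 1 := geom_sum_succ
      rw [pow_succ', ← Matrix.mulVec_mulVec, ih, Matrix.mulVec_sub, hAξ,
        Matrix.mulVec_mulVec, hs, Matrix.add_mul, Matrix.one_mul,
        Matrix.add_mulVec, Matrix.mul_assoc]
      abel
  refine ⟨ξ, ν, ?_, h1, h2, ?_⟩
  · by_contra hc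
    push_neg at hc
    apply hx0
    rw [hxe, hc.1, hc.2]
    funext i; cases i <;> rfl
  · intro m hm
    constructor
    · rw [Matrix.sub_mulVec, Matrix.one_mulVec, key m]
      abel
    · intro j hj
      rw [← Matrix.mulVec_mulVec, key j, Matrix.mulVec_sub,
        Matrix.add_mulVec, Matrix.mul_assoc, Matrix.mulVec_mulVec,
        ← Matrix.mul_assoc]
      linear_combination (norm := module) h2
end

section
/- (Unbounded stealthy actuator attack, core of Proposition 1.) Let A ∈ ℂ^{n×n}, B ∈ ℂ^{n×n_u}, C ∈ ℂ^{n_y×n}, D ∈ ℂ^{n_y×n_u}, and let z₀ ∈ ℂ with |z₀| > 1, x₀ ∈ ℂ^n, and ν ∈ ℂ^{n_u} with ν ≠ 0 satisfy A x₀ + B ν = z₀ x₀ and C x₀ + D ν = 0. Then the input sequence u(k) = z₀^k ν is unbounded, with ‖u(k)‖ = |z₀|^k ‖ν‖ → ∞ as k → ∞, while the resulting output with initial state x(0) = x₀ and dynamics x(k+1) = A x(k) + B u(k), y(k) = C x(k) + D u(k), satisfies y(k) = 0 for all k. Hence an unbounded actuator attack exists whose effect on the output is identically zero. -/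
open Matrix Filter

/-!
Along a zero direction `(x₀, ν)` at `z₀`, the input `z₀ ^ k • ν` keeps the state on the ray
`z₀ ^ k • x₀`, by linearity and `A x₀ + B ν = z₀ x₀`; the output is then `z₀ ^ k • (C x₀ + D ν) = 0`,
while `‖z₀ ^ k • ν‖ = ‖z₀‖ ^ k ‖ν‖` grows geometrically.
-/

section ZeroDirection

variable {R m ι : Type*} [CommSemiring R] [Fintype m] [Fintype ι]

theorem Matrix.mulVec_smul_add_mulVec_smul {p : Type*} (A : Matrix p m R) (B : Matrix p ι R)
    (c : R) (x : m → R) (v : ι → R) :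
    A *ᵥ (c • x) + B *ᵥ (c • v) = c • (A *ᵥ x + B *ᵥ v) := by
  rw [mulVec_smul, mulVec_smul, smul_add]

theorem state_eq_pow_smul_of_zero_direction {A : Matrix m m R} {B : Matrix m ι R} {z : R}
    {x₀ : m → R} {ν : ι → R} (hdir : A *ᵥ x₀ + B *ᵥ ν = z • x₀) {x : ℕ → m → R}
    (hx0 : x 0 = x₀) (hxrec : ∀ k, x (k + 1) = A *ᵥ x k + B *ᵥ (z ^ k • ν)) (k : ℕ) :
    x k = z ^ k • x₀ := by
  induction k with
  | zero => rw [hx0, pow_zero, one_smul]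
  | succ k ih =>
    rw [hxrec, ih, mulVec_smul_add_mulVec_smul, hdir, smul_smul, pow_succ]

end ZeroDirection

theorem tendsto_norm_pow_smul_atTop {𝕜 E : Type*} [NormedField 𝕜] [NormedAddCommGroup E]
    [NormedSpace 𝕜 E] {z : 𝕜} (hz : 1 < ‖z‖) {v : E} (hv : v ≠ 0) :
    Tendsto (fun k : ℕ => ‖z ^ k • v‖) atTop atTop := by
  simp only [norm_smul, norm_pow]
  exact (tendsto_pow_atTop_atTop_of_one_lt hz).atTop_mul_const (norm_pos_iff.mpr hv)

/-- Core of Proposition 1: a zero direction `(x₀, ν)`, `ν ≠ 0`, at a zero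
`z₀` with `|z₀| > 1` generates an unbounded input `u(k) = z₀^k ν` with
`‖u(k)‖ = |z₀|^k ‖ν‖ → ∞`, whose effect on the output is identically zero:
an unbounded stealthy actuator attack. -/
theorem unbounded_stealthy_actuator_attack
    (n n_u n_y : ℕ)
    (A : Matrix (Fin n) (Fin n) ℂ) (B : Matrix (Fin n) (Fin n_u) ℂ)
    (C : Matrix (Fin n_y) (Fin n) ℂ) (D : Matrix (Fin n_y) (Fin n_u) ℂ)
    (z₀ : ℂ) (hz : 1 < ‖z₀‖)
    (x₀ : Fin n → ℂ) (ν : Fin n_u → ℂ) (hν : ν ≠ 0)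
    (hdir : A.mulVec x₀ + B.mulVec ν = z₀ • x₀)
    (hout : C.mulVec x₀ + D.mulVec ν = 0)
    (u : ℕ → Fin n_u → ℂ) (hu : ∀ k, u k = z₀ ^ k • ν)
    (x : ℕ → Fin n → ℂ) (hx0 : x 0 = x₀)
    (hxrec : ∀ k, x (k + 1) = A.mulVec (x k) + B.mulVec (u k))
    (y : ℕ → Fin n_y → ℂ) (hy : ∀ k, y k = C.mulVec (x k) + D.mulVec (u k)) :
    (∀ k : ℕ, ‖u k‖ = ‖z₀‖ ^ k * ‖ν‖) ∧
    Tendsto (fun k : ℕ => ‖u k‖) atTop atTop ∧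
    ∀ k : ℕ, y k = 0 := by
  obtain rfl : u = fun k => z₀ ^ k • ν := funext hu
  have hstate := state_eq_pow_smul_of_zero_direction hdir hx0 hxrec
  refine ⟨fun k => by rw [norm_smul, norm_pow], tendsto_norm_pow_smul_atTop hz hν, fun k => ?_⟩
  rw [hy, hstate, mulVec_smul_add_mulVec_smul, hout, smul_zero]
end
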